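/- Let μ⊗ν be the product of arbitrary measures μ, ν on σ-rings 𝔖, 𝔗 (equal to μ^σ⊗ν^σ on σ-finite sets and ∞ elsewhere). If A ∈ 𝔖 is not μ-σ-finite and B ∈ 𝔗 is nonempty (or symmetrically), then (μ⊗ν)(A × B) = ∞. -/

import Mathlib

open Set ENNReal

/-- A family of sets is a σ-ring if it contains `∅` and is closed under
set differences and countable unions. -/
def IsSigmaRing {α : Type*} (C : Set (Set α)) : Prop :=
  ∅ ∈ C ∧ (∀ A B : Set α, A ∈ C → B ∈ C → A \ B ∈ C) ∧
    ∀ f : ℕ → Set α, (∀ n, f n ∈ C) → (⋃ n, f n) ∈ C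

/-- The σ-ring generated by a family of sets. -/
def genSR {α : Type*} (D : Set (Set α)) : Set (Set α) :=
  ⋂₀ {C | IsSigmaRing C ∧ D ⊆ C}

/-- A measure on a σ-ring: countably additive, vanishing on `∅`. -/
def IsMeasure {α : Type*} (C : Set (Set α)) (μ : Set α → ℝ≥0∞) : Prop :=
  μ ∅ = 0 ∧ ∀ f : ℕ → Set α, (∀ n, f n ∈ C) →
    Pairwise (Function.onFun Disjoint f) → μ (⋃ n, f n) = ∑' n, μ (f n)

/-- The family of μ-σ-finite sets: countable unions of sets of finite measure. -/
def sigmaFin {α : Type*} (C : Set (Set α)) (μ : Set α → ℝ≥0∞) : Set (Set α) :=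
  {A | ∃ g : ℕ → Set α, (∀ n, g n ∈ C ∧ μ (g n) < ⊤) ∧ A = ⋃ n, g n}

/-- Restriction of a family of sets to a set `S`. -/
def restrictFam {α : Type*} (D : Set (Set α)) (S : Set α) : Set (Set α) :=
  (fun A => A ∩ S) '' D

/-- The product σ-ring, generated by measurable rectangles. -/
def prodSR {α β : Type*} (S : Set (Set α)) (T : Set (Set β)) : Set (Set (α × β)) :=
  genSR {R | ∃ A ∈ S, ∃ B ∈ T, R = A ×ˢ B}

/-- The σ-algebra generated by a family of sets. -/
def genSA {α : Type*} (D : Set (Set α)) : MeasurableSpace α :=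
  MeasurableSpace.generateFrom D

/-- The (extended) Lebesgue integral of a nonnegative function with respect to a
measure on a σ-ring, as the supremum of integrals of simple functions below it. -/
noncomputable def lintSR {α : Type*} (C : Set (Set α)) (μ : Set α → ℝ≥0∞)
    (f : α → ℝ≥0∞) : ℝ≥0∞ :=
  ⨆ (n : ℕ) (c : Fin n → ℝ≥0∞) (A : Fin n → Set α) (_ : ∀ i, A i ∈ C)
    (_ : ∀ x, (∑ i, (A i).indicator (fun _ => c i) x) ≤ f x),
    ∑ i, c i * μ (A i)

/-- The positive part of an extended real, as an `ℝ≥0∞`. -/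
noncomputable def epos (x : EReal) : ℝ≥0∞ := (x ⊔ 0).abs

/-- Measurability of an extended-real function with respect to a σ-ring:
measurable for the generated σ-algebra, with support in the σ-ring. -/
def SRMeasurableE {α : Type*} (C : Set (Set α)) (f : α → EReal) : Prop :=
  @Measurable α EReal (genSA C) _ f ∧ {x | f x ≠ 0} ∈ C

/-- The Lebesgue integral of an extended-real function w.r.t. a measure on a σ-ring. -/
noncomputable def integralE {α : Type*} (C : Set (Set α)) (μ : Set α → ℝ≥0∞)
    (f : α → EReal) : EReal :=
  ((lintSR C μ fun x => epos (f x) : ℝ≥0∞) : EReal) -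
    ((lintSR C μ fun x => epos (-f x) : ℝ≥0∞) : EReal)

/-- Integrability of an extended-real function w.r.t. a measure on a σ-ring. -/
def IntegrableE {α : Type*} (C : Set (Set α)) (μ : Set α → ℝ≥0∞)
    (f : α → EReal) : Prop :=
  SRMeasurableE C f ∧ lintSR C μ (fun x => (f x).abs) < ⊤

/-- `lam` is the product of the measures `μ` and `ν` on σ-rings `S`, `T`:
the unique measure on the product σ-ring whose σ-finite component is the Halmos
product of the σ-finite components. -/
def IsProdMeasure {α β : Type*} (S : Set (Set α)) (T : Set (Set β))
    (μ : Set α → ℝ≥0∞) (ν : Set β → ℝ≥0∞) (lam : Set (α × β) → ℝ≥0∞) : Prop :=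
  IsMeasure (prodSR S T) lam ∧
  (∀ A ∈ S, ∀ B ∈ T, μ A < ⊤ → ν B < ⊤ → lam (A ×ˢ B) = μ A * ν B) ∧
  sigmaFin (prodSR S T) lam =
    genSR {R | ∃ A ∈ S, ∃ B ∈ T, μ A < ⊤ ∧ ν B < ⊤ ∧ R = A ×ˢ B}

/-! If `lam (A ×ˢ B)` were finite, `A ×ˢ B` would be `lam`-σ-finite, hence a member of the
σ-ring generated by the rectangles with sides of finite measure. Every member of a generated
σ-ring is covered by countably many generators, so `A ×ˢ B ⊆ ⋃ n, Aₙ ×ˢ Bₙ` with `μ Aₙ < ⊤`.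
Slicing at a point `b ∈ B` gives `A ⊆ ⋃ n, Aₙ`, so `A = ⋃ n, A ∩ Aₙ` is `μ`-σ-finite. -/

lemma IsSigmaRing.inter_mem {α : Type*} {C : Set (Set α)} (hC : IsSigmaRing C)
    {X Y : Set α} (hX : X ∈ C) (hY : Y ∈ C) : X ∩ Y ∈ C := by
  rw [← sdiff_sdiff_right_self]
  exact hC.2.1 _ _ hX (hC.2.1 _ _ hX hY)

lemma IsMeasure.mono {α : Type*} {C : Set (Set α)} {μ : Set α → ℝ≥0∞}
    (hC : IsSigmaRing C) (hμ : IsMeasure C μ) {X Y : Set α}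
    (hX : X ∈ C) (hY : Y ∈ C) (hXY : X ⊆ Y) : μ X ≤ μ Y := by
  let f : ℕ → Set α := fun n => if n = 0 then X else if n = 1 then Y \ X else ∅
  have hf : ∀ n, f n ∈ C := by
    intro n
    simp only [f]
    split_ifs
    exacts [hX, hC.2.1 _ _ hY hX, hC.1]
  have hdisj : Pairwise (Function.onFun Disjoint f) := by
    rintro (_ | _ | i) (_ | _ | j) hij <;>
      simp_all [f, Function.onFun, disjoint_sdiff_right, disjoint_sdiff_left]
  have hunion : (⋃ n, f n) = Y := by
    refine (iUnion_subset fun n => ?_).antisymm fun y hy => ?_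
    · simp only [f]
      split_ifs
      exacts [hXY, sdiff_subset, empty_subset _]
    · by_cases hyX : y ∈ X
      · exact mem_iUnion.2 ⟨0, by simpa [f] using hyX⟩
      · exact mem_iUnion.2 ⟨1, by simp [f, hy, hyX]⟩
  calc μ X = μ (f 0) := rfl
    _ ≤ ∑' n, μ (f n) := ENNReal.le_tsum 0
    _ = μ Y := by rw [← hμ.2 f hf hdisj, hunion]

lemma subset_genSR {α : Type*} (D : Set (Set α)) : D ⊆ genSR D :=
  fun _ hA _ hC => hC.2 hA

lemma genSR_subset {α : Type*} {D C : Set (Set α)} (hC : IsSigmaRing C) (hDC : D ⊆ C) :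
    genSR D ⊆ C :=
  fun _ hA => hA C ⟨hC, hDC⟩

lemma isSigmaRing_setOf_subset_iUnion {α : Type*} {D : Set (Set α)} (hD : ∅ ∈ D) :
    IsSigmaRing {E : Set α | ∃ f : ℕ → Set α, (∀ n, f n ∈ D) ∧ E ⊆ ⋃ n, f n} := by
  refine ⟨⟨fun _ => ∅, fun _ => hD, empty_subset _⟩, ?_, ?_⟩
  · rintro E _ ⟨f, hf, hEf⟩ _
    exact ⟨f, hf, sdiff_subset.trans hEf⟩
  · intro E hE
    choose f hfD hEf using hE
    refine ⟨fun n => f n.unpair.1 n.unpair.2, fun n => hfD _ _, iUnion_subset fun k x hx => ?_⟩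
    obtain ⟨m, hm⟩ := mem_iUnion.1 (hEf k hx)
    exact mem_iUnion.2 ⟨Nat.pair k m, by simpa [Nat.unpair_pair] using hm⟩

lemma exists_subset_iUnion_of_mem_genSR {α : Type*} {D : Set (Set α)} (hD : ∅ ∈ D)
    {E : Set α} (hE : E ∈ genSR D) : ∃ f : ℕ → Set α, (∀ n, f n ∈ D) ∧ E ⊆ ⋃ n, f n :=
  genSR_subset (isSigmaRing_setOf_subset_iUnion hD)
    (fun R hR => ⟨fun _ => R, fun _ => hR, subset_iUnion (fun _ => R) 0⟩) hE

lemma exists_subset_iUnion_prod_of_mem_genSR {α β : Type*} {S : Set (Set α)}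
    {T : Set (Set β)} {μ : Set α → ℝ≥0∞} {ν : Set β → ℝ≥0∞}
    (hS : IsSigmaRing S) (hT : IsSigmaRing T) (hμ : IsMeasure S μ) (hν : IsMeasure T ν)
    {E : Set (α × β)}
    (hE : E ∈ genSR {R | ∃ A ∈ S, ∃ B ∈ T, μ A < ⊤ ∧ ν B < ⊤ ∧ R = A ×ˢ B}) :
    ∃ (As : ℕ → Set α) (Bs : ℕ → Set β), (∀ n, As n ∈ S ∧ μ (As n) < ⊤) ∧
      (∀ n, Bs n ∈ T ∧ ν (Bs n) < ⊤) ∧ E ⊆ ⋃ n, As n ×ˢ Bs n := by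
  have hempty : (∅ : Set (α × β)) ∈
      {R | ∃ A ∈ S, ∃ B ∈ T, μ A < ⊤ ∧ ν B < ⊤ ∧ R = A ×ˢ B} :=
    ⟨∅, hS.1, ∅, hT.1, by simp [hμ.1], by simp [hν.1], (empty_prod).symm⟩
  obtain ⟨f, hfD, hEf⟩ := exists_subset_iUnion_of_mem_genSR hempty hE
  choose As hAs Bs hBs hμAs hνBs hf using hfD
  refine ⟨As, Bs, fun n => ⟨hAs n, hμAs n⟩, fun n => ⟨hBs n, hνBs n⟩, ?_⟩
  simpa only [← hf] using hEf

lemma mem_sigmaFin_of_lt_top {α : Type*} {C : Set (Set α)} {μ : Set α → ℝ≥0∞}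
    {A : Set α} (hA : A ∈ C) (hμA : μ A < ⊤) : A ∈ sigmaFin C μ :=
  ⟨fun _ => A, fun _ => ⟨hA, hμA⟩, (iUnion_const A).symm⟩

lemma mem_sigmaFin_of_subset_iUnion {α : Type*} {C : Set (Set α)} {μ : Set α → ℝ≥0∞}
    (hC : IsSigmaRing C) (hμ : IsMeasure C μ) {A : Set α} (hA : A ∈ C)
    {g : ℕ → Set α} (hg : ∀ n, g n ∈ C ∧ μ (g n) < ⊤) (hAg : A ⊆ ⋃ n, g n) :
    A ∈ sigmaFin C μ := by
  have hmem : ∀ n, A ∩ g n ∈ C := fun n => hC.inter_mem hA (hg n).1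
  refine ⟨fun n => A ∩ g n, fun n => ⟨hmem n, ?_⟩, ?_⟩
  · exact (hμ.mono hC (hmem n) (hg n).1 inter_subset_right).trans_lt (hg n).2
  · rw [← inter_iUnion, inter_eq_left.2 hAg]

lemma subset_iUnion_left_of_prod_subset {α β : Type*} {A : Set α} {B : Set β} {b : β}
    (hb : b ∈ B) {As : ℕ → Set α} {Bs : ℕ → Set β} (h : A ×ˢ B ⊆ ⋃ n, As n ×ˢ Bs n) :
    A ⊆ ⋃ n, As n := fun a ha => by
  obtain ⟨n, hn⟩ := mem_iUnion.1 (h (mk_mem_prod ha hb))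
  exact mem_iUnion.2 ⟨n, hn.1⟩

lemma subset_iUnion_right_of_prod_subset {α β : Type*} {A : Set α} {B : Set β} {a : α}
    (ha : a ∈ A) {As : ℕ → Set α} {Bs : ℕ → Set β} (h : A ×ˢ B ⊆ ⋃ n, As n ×ˢ Bs n) :
    B ⊆ ⋃ n, Bs n := fun b hb => by
  obtain ⟨n, hn⟩ := mem_iUnion.1 (h (mk_mem_prod ha hb))
  exact mem_iUnion.2 ⟨n, hn.2⟩

/-- the product measure takes the value `∞` on a rectangle in
which one side is not σ-finite and the other is nonempty. -/
theorem stmt_12 {α β : Type*} (S : Set (Set α)) (T : Set (Set β))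
    (μ : Set α → ℝ≥0∞) (ν : Set β → ℝ≥0∞)
    (hS : IsSigmaRing S) (hT : IsSigmaRing T)
    (hμ : IsMeasure S μ) (hν : IsMeasure T ν)
    (lam : Set (α × β) → ℝ≥0∞) (hlam : IsProdMeasure S T μ ν lam)
    (A : Set α) (B : Set β) (hA : A ∈ S) (hB : B ∈ T)
    (h : (A ∉ sigmaFin S μ ∧ B.Nonempty) ∨ (B ∉ sigmaFin T ν ∧ A.Nonempty)) :
    lam (A ×ˢ B) = ⊤ := by
  by_contra hfin
  have hsf : A ×ˢ B ∈ sigmaFin (prodSR S T) lam :=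
    mem_sigmaFin_of_lt_top (subset_genSR _ ⟨A, hA, B, hB, rfl⟩) (lt_top_iff_ne_top.2 hfin)
  rw [hlam.2.2] at hsf
  obtain ⟨As, Bs, hAs, hBs, hcover⟩ :=
    exists_subset_iUnion_prod_of_mem_genSR hS hT hμ hν hsf
  rcases h with ⟨hAnot, b, hb⟩ | ⟨hBnot, a, ha⟩
  · exact hAnot (mem_sigmaFin_of_subset_iUnion hS hμ hA hAs
      (subset_iUnion_left_of_prod_subset hb hcover))
  · exact hBnot (mem_sigmaFin_of_subset_iUnion hT hν hB hBs
      (subset_iUnion_right_of_prod_subset ha hcover))
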